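/- arXiv:2507.13669 — 2 statements merged into one kernel-verified Lean document; each statement's English description precedes it below -/
import Mathlib

section
/- Let h ∈ ℝ, x₀ ∈ ℝ with x₀ ≠ 0, z₀ ∈ ℝ, ε ∈ {1, −1}, and let v = (v₁, v₂, 0) ∈ ℝ³ be a unit vector. Define Ψ(s,t) = (x₀ cos t, x₀ sin t, h t + ε s + z₀) (a circular right cylinder of radius |x₀| about the z-axis), with x(s) = x₀, z(s) = ε s + z₀, unit normal N(s,t) = (− x₀ z'(s) cos t, − x₀ z'(s) sin t, 0)/√(x₀²) and mean curvature H = z'(s) x₀² / (x₀²)^{3/2}. Then at every point (s,t) with ⟨Ψ(s,t), v⟩ > 0, the singular minimal equation H = α ⟨N(s,t), v⟩ / ⟨Ψ(s,t), v⟩ holds with α = −1. -/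
open Real

/-- The Euclidean inner product on `ℝ³ = ℝ × ℝ × ℝ`. -/
def dot3 (p q : ℝ × ℝ × ℝ) : ℝ := p.1 * q.1 + p.2.1 * q.2.1 + p.2.2 * q.2.2

/-- **Existence part of the classification.** The circular right cylinder of radius `|x₀|` about
the z-axis, helicoidally parametrized by `Ψ(s,t) = (x₀ cos t, x₀ sin t, h t + ε s + z₀)` (profile
curve `x ≡ x₀`, `z(s) = ε s + z₀`), with unit normal `N(s,t) = (−x₀ ε cos t, −x₀ ε sin t, 0)/√(x₀²)`
and mean curvature `H = ε x₀²/(x₀²)^{3/2}`, satisfies the singular minimal surface equation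
`H = α ⟨N, v⟩ / ⟨Ψ, v⟩` with `α = -1` at every point where `⟨Ψ, v⟩ > 0`, whenever
`v = (v₁, v₂, 0)` is a unit vector orthogonal to the twist axis. -/
theorem cylinder_is_singular_minimal
    (h x₀ z₀ ε v₁ v₂ : ℝ) (hx₀ : x₀ ≠ 0) (hε : ε = 1 ∨ ε = -1)
    (hv : v₁ ^ 2 + v₂ ^ 2 + (0 : ℝ) ^ 2 = 1)
    (Ψ : ℝ → ℝ → ℝ × ℝ × ℝ)
    (hΨ : ∀ s t : ℝ, Ψ s t = (x₀ * Real.cos t, x₀ * Real.sin t, h * t + ε * s + z₀))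
    (N : ℝ → ℝ → ℝ × ℝ × ℝ)
    (hN : ∀ s t : ℝ, N s t = (Real.sqrt (x₀ ^ 2))⁻¹ •
      (-(x₀ * ε * Real.cos t), -(x₀ * ε * Real.sin t), (0 : ℝ)))
    (H : ℝ) (hH : H = ε * x₀ ^ 2 / (x₀ ^ 2) ^ ((3 : ℝ) / 2)) :
    ∀ s t : ℝ, 0 < dot3 (Ψ s t) (v₁, v₂, 0) →
      H = (-1 : ℝ) * dot3 (N s t) (v₁, v₂, 0) / dot3 (Ψ s t) (v₁, v₂, 0) := by
  intro s t hpos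
  have hx2 : (0 : ℝ) < x₀ ^ 2 := by positivity
  have hs : Real.sqrt (x₀ ^ 2) ≠ 0 := by
    positivity
  have hrpow : (x₀ ^ 2) ^ ((3 : ℝ) / 2) = x₀ ^ 2 * Real.sqrt (x₀ ^ 2) := by
    rw [show ((3 : ℝ) / 2) = 1 + 1 / 2 by norm_num,
      Real.rpow_add hx2, Real.rpow_one, Real.sqrt_eq_rpow]
  set D := dot3 (Ψ s t) (v₁, v₂, 0) with hD
  have hDval : D = x₀ * Real.cos t * v₁ + x₀ * Real.sin t * v₂ := by
    simp [hD, dot3, hΨ s t]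
  have hNval : dot3 (N s t) (v₁, v₂, 0) = (Real.sqrt (x₀ ^ 2))⁻¹ * (-ε) * D := by
    simp only [hN s t, dot3, Prod.smul_fst, Prod.smul_snd, smul_eq_mul]
    rw [hDval]; ring
  rw [hNval, hH, hrpow]
  have hDne : D ≠ 0 := ne_of_gt hpos
  field_simp
end

section
/- Let h, α, v₃ ∈ ℝ and let x, z, θ : ℝ → ℝ be functions. Define A₀(s) = −v₃(α x(s) cos θ(s) (x(s)² + h² cos²θ(s)) − x(s) z(s) θ'(s)(h² + x(s)²) − x(s)² z(s) sin θ(s) − 2h² z(s) sin θ(s) cos²θ(s)) and A₁(s) = h v₃ (x(s) θ'(s)(h² + x(s)²) + x(s)² sin θ(s) + 2h² sin θ(s) cos²θ(s)). Then for all s: h·A₀(s) − z(s)·A₁(s) = −α h v₃ x(s) cos θ(s) (x(s)² + h² cos²θ(s)). In particular, if A₀ and A₁ vanish identically, h ≠ 0, α ≠ 0, v₃ ≠ 0, and x(s)² + h² cos²θ(s) > 0 for all s, then x(s) cos θ(s) = 0 for all s. -/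
open Real

theorem helicoidal_combination_eq {R : Type*} [CommRing R] (h α v₃ x z c s θ' : R) :
    h * (-v₃ * (α * x * c * (x ^ 2 + h ^ 2 * c ^ 2) - x * z * θ' * (h ^ 2 + x ^ 2)
        - x ^ 2 * z * s - 2 * h ^ 2 * z * s * c ^ 2))
      - z * (h * v₃ * (x * θ' * (h ^ 2 + x ^ 2) + x ^ 2 * s + 2 * h ^ 2 * s * c ^ 2)) =
      -(α * h * v₃ * x * c * (x ^ 2 + h ^ 2 * c ^ 2)) := by
  ring

/-- The key linear combination `h·A₀ − z·A₁` of the coefficients `A₀, A₁` arising in the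
classification of helicoidal singular minimal surfaces equals
`−α h v₃ x cos θ (x² + h² cos²θ)`; in particular, if `A₀` and `A₁` vanish identically and
`h, α, v₃ ≠ 0` and the regularity condition holds, then `x cos θ ≡ 0`. -/
theorem helicoidal_linear_combination_A0_A1
    (h α v₃ : ℝ) (x z θ A₀ A₁ : ℝ → ℝ)
    (hA₀ : ∀ s : ℝ, A₀ s = -v₃ *
      (α * x s * Real.cos (θ s) * ((x s) ^ 2 + h ^ 2 * (Real.cos (θ s)) ^ 2)
        - x s * z s * deriv θ s * (h ^ 2 + (x s) ^ 2)
        - (x s) ^ 2 * z s * Real.sin (θ s)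
        - 2 * h ^ 2 * z s * Real.sin (θ s) * (Real.cos (θ s)) ^ 2))
    (hA₁ : ∀ s : ℝ, A₁ s = h * v₃ *
      (x s * deriv θ s * (h ^ 2 + (x s) ^ 2)
        + (x s) ^ 2 * Real.sin (θ s)
        + 2 * h ^ 2 * Real.sin (θ s) * (Real.cos (θ s)) ^ 2)) :
    (∀ s : ℝ, h * A₀ s - z s * A₁ s =
      -(α * h * v₃ * x s * Real.cos (θ s) * ((x s) ^ 2 + h ^ 2 * (Real.cos (θ s)) ^ 2))) ∧
    ((∀ s : ℝ, A₀ s = 0) → (∀ s : ℝ, A₁ s = 0) → h ≠ 0 → α ≠ 0 → v₃ ≠ 0 →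
      (∀ s : ℝ, 0 < (x s) ^ 2 + h ^ 2 * (Real.cos (θ s)) ^ 2) →
      ∀ s : ℝ, x s * Real.cos (θ s) = 0) := by
  have combination : ∀ s : ℝ, h * A₀ s - z s * A₁ s =
      -(α * h * v₃ * x s * Real.cos (θ s) * ((x s) ^ 2 + h ^ 2 * (Real.cos (θ s)) ^ 2)) := by
    intro s
    rw [hA₀ s, hA₁ s]
    exact helicoidal_combination_eq ..
  refine ⟨combination, fun hA₀_zero hA₁_zero hh hα hv₃ hreg s => ?_⟩
  have hs := combination s
  rw [hA₀_zero s, hA₁_zero s, mul_zero, mul_zero, sub_zero, zero_eq_neg] at hs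
  simpa [hα, hh, hv₃, (hreg s).ne'] using hs
end
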